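/- arXiv:1309.5440 — 7 statements merged into one kernel-verified Lean document; each statement's English description precedes it below -/
import Mathlib

section
/- Let A, B, C be finite sets, let φ : B → C, and let q : A × B → ℝ be nonnegative. For a function p : A × C → ℝ with nonnegative values, define f(p) = ∑_{a ∈ A, b ∈ B} p(a, φ(b)) · q(a,b) · ln( q(a,b) / ∑_{a' ∈ A} p(a', φ(b)) · q(a',b) ), with the convention 0·ln(0/0)=0. Then f is concave in p: for any 0 ≤ θ ≤ 1 and any two nonnegative p₁, p₂ (for which all the denominators appearing in f(θp₁+(1-θ)p₂), f(p₁), f(p₂) are positive whenever the corresponding numerators are), f(θ p₁ + (1-θ) p₂) ≥ θ f(p₁) + (1-θ) f(p₂). In particular, taking A = X^n, B = Y^n, C = Y^{n-1}, φ the prefix map y^n ↦ y^{n-1}, and q a channel causal conditioning, the directed information I(X^n → Y^n) is concave in the input causal conditioning pmf P(x^n‖y^{n-1}) for fixed P(y^n‖x^n). -/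
/-!
Grouping the sum by `b` and writing `S_b(p) = ∑ a, p(a, φ b) q(a,b)`,
`f(p) = ∑_{a,b} p(a, φ b) q(a,b) ln q(a,b) + ∑_b negMulLog (S_b(p))`.
Both `p ↦ S_b(p)` and the first sum are linear in `p`, and `negMulLog` is concave on `[0, ∞)`,
so `f` is concave on the cone of nonnegative `p`. The identity holds for every nonnegative `p`:
when `S_b(p) = 0`, every summand `p(a, φ b) q(a,b)` vanishes as well.
-/

open Finset

/-- `log 0 = 0` and `x / 0 = 0` realise the convention `0 · ln (0/0) = 0`. -/
noncomputable def dirFun {A B C : Type*} [Fintype A] [Fintype B] (φ : B → C)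
    (q : A → B → ℝ) (p : A → C → ℝ) : ℝ :=
  ∑ a, ∑ b, p a (φ b) * q a b * Real.log (q a b / ∑ a', p a' (φ b) * q a' b)

open Real

theorem ConcaveOn.sum {𝕜 E β ι : Type*} [Semiring 𝕜] [PartialOrder 𝕜]
    [AddCommMonoid E] [AddCommMonoid β] [PartialOrder β] [IsOrderedAddMonoid β]
    [SMul 𝕜 E] [DistribMulAction 𝕜 β] {s : Set E} {t : Finset ι} {f : ι → E → β}
    (hs : Convex 𝕜 s) (hf : ∀ i ∈ t, ConcaveOn 𝕜 s (f i)) :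
    ConcaveOn 𝕜 s fun x => ∑ i ∈ t, f i x := by
  refine ⟨hs, fun x hx y hy a b ha hb hab => ?_⟩
  simp only [smul_sum, ← sum_add_distrib]
  exact sum_le_sum fun i hi => (hf i hi).2 hx hy ha hb hab

theorem sum_mul_mul_log_div_sum {ι : Type*} (s : Finset ι) {p r : ι → ℝ}
    (hp : ∀ i ∈ s, 0 ≤ p i) (hr : ∀ i ∈ s, 0 ≤ r i) :
    ∑ i ∈ s, p i * r i * log (r i / ∑ j ∈ s, p j * r j) =
      ∑ i ∈ s, p i * r i * log (r i) + negMulLog (∑ j ∈ s, p j * r j) := by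
  set S := ∑ j ∈ s, p j * r j
  have hterm : ∀ i ∈ s,
      p i * r i * log (r i / S) = p i * r i * log (r i) - p i * r i * log S := by
    intro i hi
    rcases (mul_nonneg (hp i hi) (hr i hi)).eq_or_lt with h | h
    · simp [← h]
    · have hS : 0 < S := h.trans_le <|
        single_le_sum (fun j hj => mul_nonneg (hp j hj) (hr j hj)) hi
      rw [log_div (pos_of_mul_pos_right h (hp i hi)).ne' hS.ne']
      ring
  rw [sum_congr rfl hterm, sum_sub_distrib, ← sum_mul, negMulLog, sub_eq_add_neg, neg_mul]

/-- For `w = q` this is the output marginal `P(yⁿ)` at `b = yⁿ`. -/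
noncomputable def marginal {A B C : Type*} [Fintype A] (φ : B → C) (w : A → B → ℝ)
    (b : B) : (A → C → ℝ) →ₗ[ℝ] ℝ where
  toFun p := ∑ a, p a (φ b) * w a b
  map_add' p p' := by simp [add_mul, sum_add_distrib]
  map_smul' c p := by simp [mul_sum, mul_assoc]

theorem dirFun_eq_sum_marginal {A B C : Type*} [Fintype A] [Fintype B] (φ : B → C)
    {q : A → B → ℝ} (hq : 0 ≤ q) {p : A → C → ℝ} (hp : 0 ≤ p) :
    dirFun φ q p = ∑ b, (marginal φ (fun a b => q a b * log (q a b)) b p +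
      negMulLog (marginal φ q b p)) := by
  rw [dirFun, sum_comm]
  refine sum_congr rfl fun b _ => ?_
  simp only [marginal, LinearMap.coe_mk, AddHom.coe_mk, ← mul_assoc]
  exact sum_mul_mul_log_div_sum _ (fun a _ => hp a (φ b)) (fun a _ => hq a b)

theorem concaveOn_dirFun {A B C : Type*} [Fintype A] [Fintype B] (φ : B → C)
    {q : A → B → ℝ} (hq : 0 ≤ q) : ConcaveOn ℝ (Set.Ici 0) (dirFun φ q) := by
  refine (ConcaveOn.sum (convex_Ici 0) fun b _ => ?_).congr
    fun p hp => (dirFun_eq_sum_marginal φ hq hp).symm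
  refine ((marginal φ _ b).concaveOn (convex_Ici 0)).add ?_
  refine (concaveOn_negMulLog.comp_linearMap (marginal φ q b)).subset ?_ (convex_Ici 0)
  intro p hp
  exact sum_nonneg fun a _ => mul_nonneg (hp a (φ b)) (hq a b)

theorem stmt_1_general {A B C : Type*} [Fintype A] [Fintype B] (φ : B → C) (q : A → B → ℝ)
    (hq : ∀ a b, 0 ≤ q a b) (θ : ℝ) (hθ0 : 0 ≤ θ) (hθ1 : θ ≤ 1)
    (p₁ p₂ : A → C → ℝ) (hp₁ : ∀ a c, 0 ≤ p₁ a c) (hp₂ : ∀ a c, 0 ≤ p₂ a c) :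
    θ * dirFun φ q p₁ + (1 - θ) * dirFun φ q p₂ ≤
      dirFun φ q (fun a c => θ * p₁ a c + (1 - θ) * p₂ a c) :=
  (concaveOn_dirFun φ hq).2 hp₁ hp₂ hθ0 (sub_nonneg.2 hθ1) (add_sub_cancel θ 1)

/-- **Concavity of the directed information in the input causal conditioning**
(Lemma 9 / Appendix A of the paper, in its generic form).  For nonnegative `q` and
nonnegative `p₁, p₂` (such that every denominator appearing in `f(θp₁+(1-θ)p₂)`, `f(p₁)`,
`f(p₂)` is positive whenever the corresponding numerator `q(a,b)` is), and `0 ≤ θ ≤ 1`,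
`f(θp₁ + (1-θ)p₂) ≥ θ f(p₁) + (1-θ) f(p₂)`.  Taking `A = Xⁿ`, `B = Yⁿ`, `C = Yⁿ⁻¹`,
`φ` the prefix map and `q` a channel causal conditioning, this says the directed
information `I(Xⁿ → Yⁿ)` is concave in `P(xⁿ‖yⁿ⁻¹)` for fixed `P(yⁿ‖xⁿ)`. -/
theorem stmt_1 {A B C : Type*} [Fintype A] [Fintype B] (φ : B → C) (q : A → B → ℝ)
    (hq : ∀ a b, 0 ≤ q a b) (θ : ℝ) (hθ0 : 0 ≤ θ) (hθ1 : θ ≤ 1)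
    (p₁ p₂ : A → C → ℝ) (hp₁ : ∀ a c, 0 ≤ p₁ a c) (hp₂ : ∀ a c, 0 ≤ p₂ a c)
    (hden : ∀ p ∈ ({p₁, p₂, fun a c => θ * p₁ a c + (1 - θ) * p₂ a c} : Set (A → C → ℝ)),
      ∀ a b, 0 < q a b → 0 < ∑ a', p a' (φ b) * q a' b) :
    θ * dirFun φ q p₁ + (1 - θ) * dirFun φ q p₂ ≤
      dirFun φ q (fun a c => θ * p₁ a c + (1 - θ) * p₂ a c) :=
  stmt_1_general φ q hq θ hθ0 hθ1 p₁ p₂ hp₁ hp₂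
end

section
/- Let X, Y be finite sets, n ≥ 1, and let q(y^n‖x^n) = ∏_{i=1}^n w(y_i | x^i, y^{i-1}) be a channel causal conditioning. Let p*(x^n‖y^{n-1}) be a causal conditioning pmf with all entries strictly positive that achieves the maximum of the directed information I(X^n → Y^n) over all causal conditioning pmfs, and let p*(y^n) = ∑_{x^n} q(y^n‖x^n) p*(x^n‖y^{n-1}) be the induced output pmf. If there exists a pmf r on X^n such that p*(y^n) = ∑_{x^n} q(y^n‖x^n) r(x^n) for all y^n, then the maximum of I(X^n → Y^n) over pmfs on X^n (i.e., over causal conditionings that do not depend on y^{n-1}) equals the maximum of I(X^n → Y^n) over all causal conditioning pmfs, and r attains it. -/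
open Finset

/-- `p : Xⁿ × Yⁿ⁻¹ → ℝ` is a causal conditioning pmf `p(xⁿ‖yⁿ⁻¹)`:
`p(xⁿ, yⁿ⁻¹) = ∏_{i=1}^n q_i(x_i | x^{i-1}, y^{i-1})` for conditional pmfs `q_i`
(coordinates `0`-indexed). -/
def IsCausalCond {X Y : Type*} [Fintype X] (n : ℕ)
    (p : (Fin n → X) → (Fin (n - 1) → Y) → ℝ) : Prop :=
  ∃ q : (i : Fin n) → X → (Fin i.1 → X) → (Fin i.1 → Y) → ℝ,
    (∀ i xi xs ys, 0 ≤ q i xi xs ys) ∧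
    (∀ i xs ys, (∑ xi, q i xi xs ys) = 1) ∧
    (∀ x y, p x y =
      ∏ i, q i (x i) (fun j => x ⟨j.1, by have := j.isLt; have := i.isLt; omega⟩)
        (fun j => y ⟨j.1, by have := j.isLt; have := i.isLt; omega⟩))

/-- `q : Xⁿ × Yⁿ → ℝ` is a channel causal conditioning `q(yⁿ‖xⁿ)`:
`q(yⁿ, xⁿ) = ∏_{i=1}^n w_i(y_i | x^i, y^{i-1})` for conditional pmfs `w_i`. -/
def IsChannelCausalCond {X Y : Type*} [Fintype Y] (n : ℕ)
    (q : (Fin n → X) → (Fin n → Y) → ℝ) : Prop :=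
  ∃ w : (i : Fin n) → Y → (Fin (i.1 + 1) → X) → (Fin i.1 → Y) → ℝ,
    (∀ i yi xs ys, 0 ≤ w i yi xs ys) ∧
    (∀ i xs ys, (∑ yi, w i yi xs ys) = 1) ∧
    (∀ x y, q x y =
      ∏ i, w i (y i) (fun j => x ⟨j.1, by have := j.isLt; have := i.isLt; omega⟩)
        (fun j => y ⟨j.1, by have := j.isLt; have := i.isLt; omega⟩))

/-- The prefix `yⁿ⁻¹` of `yⁿ`. -/
def pref {Y : Type*} (n : ℕ) (y : Fin n → Y) : Fin (n - 1) → Y :=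
  fun j => y ⟨j.1, by have := j.isLt; omega⟩

/-- The directed information `I(Xⁿ → Yⁿ)` of an input causal conditioning `p(xⁿ‖yⁿ⁻¹)`
through a channel `q(yⁿ‖xⁿ)`. -/
noncomputable def dirInfo {X Y : Type*} [Fintype X] [Fintype Y] (n : ℕ)
    (p : (Fin n → X) → (Fin (n - 1) → Y) → ℝ)
    (q : (Fin n → X) → (Fin n → Y) → ℝ) : ℝ :=
  ∑ x, ∑ y, p x (pref n y) * q x y *
    Real.log (q x y / ∑ x', p x' (pref n y) * q x' y)

/-!
If `p` maximizes `I(Xⁿ → Yⁿ)` and is everywhere positive, it lies in the relative interior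
of the convex set of causal conditionings, so the line from `r` through `p` can be extended a
little beyond `p`: `p' = (1 + ε) p - ε r` is still a causal conditioning. Along this line the
output pmf `∑ₓ q p` does not change (it is the same for `p` and `r`), so the directed
information is affine on it: `I(p') = (1 + ε) I(p) - ε I(r)`. Maximality of `p` gives
`I(p') ≤ I(p)`, i.e. `I(p) ≤ I(r)`, and hence `I(r) = I(p)` is the maximum.

That `p'` is a causal conditioning uses the characterization of causal conditionings as the
nonnegative `p` whose marginals on `xⁱ` have total mass one and depend on `y` only through
`yⁱ⁻¹`; this condition is visibly stable under affine combinations.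
-/

def extendPrefix {α : Type*} (a : α) {i : ℕ} (v : Fin i → α) (m : ℕ) : Fin m → α :=
  fun j => if h : j.1 < i then v ⟨j.1, h⟩ else a

lemma extendPrefix_of_lt {α : Type*} (a : α) {i m : ℕ} (v : Fin i → α) {j : Fin m}
    (h : j.1 < i) : extendPrefix a v m j = v ⟨j.1, h⟩ :=
  dif_pos h

section PrefixMarginal

variable {X : Type*} [Fintype X] {n : ℕ}

open scoped Classical in
noncomputable def prefixMarginal (f : (Fin n → X) → ℝ) (i : ℕ) (x : Fin n → X) : ℝ :=
  ∑ x' with ∀ j : Fin n, j.1 < i → x' j = x j, f x'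

lemma prefixMarginal_zero (f : (Fin n → X) → ℝ) (x : Fin n → X) :
    prefixMarginal f 0 x = ∑ x', f x' := by
  simp [prefixMarginal]

lemma prefixMarginal_of_le (f : (Fin n → X) → ℝ) {i : ℕ} (hi : n ≤ i) (x : Fin n → X) :
    prefixMarginal f i x = f x := by
  classical
  have : ∀ x' : Fin n → X, (∀ j : Fin n, j.1 < i → x' j = x j) ↔ x' = x := fun x' =>
    ⟨fun h => funext fun j => h j (j.2.trans_le hi), fun h _ _ => h ▸ rfl⟩
  rw [prefixMarginal, filter_congr fun x' _ => this x', filter_eq', if_pos (mem_univ x),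
    sum_singleton]

lemma prefixMarginal_congr (f : (Fin n → X) → ℝ) {i : ℕ} {x x' : Fin n → X}
    (h : ∀ j : Fin n, j.1 < i → x j = x' j) : prefixMarginal f i x = prefixMarginal f i x' := by
  unfold prefixMarginal
  congr 1
  ext z
  simp only [mem_filter, mem_univ, true_and]
  exact forall₂_congr fun j hj => by rw [h j hj]

lemma prefixMarginal_eq_sum_update (f : (Fin n → X) → ℝ) {i : ℕ} (hi : i < n)
    (x : Fin n → X) :
    prefixMarginal f i x = ∑ a, prefixMarginal f (i + 1) (Function.update x ⟨i, hi⟩ a) := by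
  classical
  rw [prefixMarginal, ← sum_fiberwise _ (fun x' => x' ⟨i, hi⟩)]
  refine sum_congr rfl fun a _ => ?_
  rw [prefixMarginal, filter_filter]
  congr 1
  ext z
  simp only [mem_filter, mem_univ, true_and, Nat.lt_succ_iff_lt_or_eq, or_imp, forall_and]
  refine and_congr (forall₂_congr fun j hj => ?_) ⟨fun h j hj => ?_, fun h => ?_⟩
  · rw [Function.update_of_ne (Fin.ne_of_lt hj)]
  · obtain rfl : j = ⟨i, hi⟩ := Fin.ext hj
    rwa [Function.update_self]
  · simpa using h ⟨i, hi⟩ rfl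

lemma prefixMarginal_nonneg {f : (Fin n → X) → ℝ} (hf : ∀ x, 0 ≤ f x) (i : ℕ) (x : Fin n → X) :
    0 ≤ prefixMarginal f i x :=
  sum_nonneg fun x' _ => hf x'

lemma prefixMarginal_succ_le {f : (Fin n → X) → ℝ} (hf : ∀ x, 0 ≤ f x) (i : ℕ)
    (x : Fin n → X) : prefixMarginal f (i + 1) x ≤ prefixMarginal f i x := by
  classical
  unfold prefixMarginal
  exact sum_le_sum_of_subset_of_nonneg
    (monotone_filter_right _ fun _ _ h j hj => h j (by omega)) fun x' _ _ => hf x'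

lemma prefixMarginal_linear_comb (a b : ℝ) (f g : (Fin n → X) → ℝ) (i : ℕ) (x : Fin n → X) :
    prefixMarginal (fun x => a * f x + b * g x) i x
      = a * prefixMarginal f i x + b * prefixMarginal g i x := by
  simp only [prefixMarginal, sum_add_distrib, mul_sum]

lemma prefixMarginal_extendPrefix_congr (f : (Fin n → X) → ℝ) {i : ℕ} (xs : Fin i → X)
    (a a' : X) :
    prefixMarginal f i (extendPrefix a xs n) = prefixMarginal f i (extendPrefix a' xs n) :=
  prefixMarginal_congr f fun j hj => by rw [extendPrefix_of_lt _ _ hj, extendPrefix_of_lt _ _ hj]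

lemma sum_prefixMarginal_extendPrefix (f : (Fin n → X) → ℝ) {i : ℕ} (hi : i < n)
    (xs : Fin i → X) (a₀ : X) :
    ∑ a, prefixMarginal f (i + 1) (extendPrefix a xs n)
      = prefixMarginal f i (extendPrefix a₀ xs n) := by
  rw [prefixMarginal_eq_sum_update f hi]
  refine sum_congr rfl fun a _ => prefixMarginal_congr f fun j hj => ?_
  rcases (Nat.lt_succ_iff_lt_or_eq.mp hj) with hj | hj
  · rw [Function.update_of_ne (Fin.ne_of_lt hj), extendPrefix_of_lt _ _ hj,
      extendPrefix_of_lt _ _ hj]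
  · obtain rfl : j = ⟨i, hi⟩ := Fin.ext hj
    rw [Function.update_self]
    exact dif_neg (lt_irrefl i)

lemma prefixMarginal_prod {F : (Fin n → X) → Fin n → ℝ}
    (hF : ∀ x x' j, (∀ k ≤ j, x k = x' k) → F x j = F x' j)
    (hF1 : ∀ x j, ∑ a, F (Function.update x j a) j = 1) (i : ℕ) (x : Fin n → X) :
    prefixMarginal (fun x => ∏ j, F x j) i x = ∏ j, if j.1 < i then F x j else 1 := by
  classical
  suffices ∀ k i, n ≤ i + k → ∀ x,
      prefixMarginal (fun x => ∏ j, F x j) i x = ∏ j, if j.1 < i then F x j else 1 from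
    this n i (by omega) x
  intro k
  induction k with
  | zero =>
    intro i hi x
    rw [prefixMarginal_of_le _ (by omega)]
    exact prod_congr rfl fun j _ => (if_pos (by omega)).symm
  | succ k ih =>
    intro i hik x
    rcases le_or_gt n i with hi | hi
    · exact ih i (by omega) x
    rw [prefixMarginal_eq_sum_update _ hi]
    set i' : Fin n := ⟨i, hi⟩
    have hsplit : ∀ a, (∏ j : Fin n, if j.1 < i + 1 then F (Function.update x i' a) j else 1)
        = (∏ j : Fin n, if j.1 < i then F x j else 1) * F (Function.update x i' a) i' := by
      intro a
      rw [← Fintype.prod_ite_eq' i' (F (Function.update x i' a)), ← prod_mul_distrib]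
      refine prod_congr rfl fun j _ => ?_
      rcases lt_trichotomy j.1 i with h | h | h
      · have hj : j ≠ i' := Fin.ne_of_lt h
        rw [if_pos (by omega), if_pos h, if_neg hj, mul_one]
        exact hF _ _ j fun k hk => Function.update_of_ne (Fin.ne_of_lt (lt_of_le_of_lt hk h)) _ _
      · obtain rfl : j = i' := Fin.ext h
        rw [if_pos (by omega), if_neg (by omega), if_pos rfl, one_mul]
      · have hj : j ≠ i' := (Fin.ne_of_lt h).symm
        rw [if_neg (by omega), if_neg (by omega), if_neg hj, mul_one]
    simp_rw [ih (i + 1) (by omega), hsplit]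
    rw [← mul_sum, hF1, mul_one]

end PrefixMarginal

section Causal

variable {X Y : Type*} [Fintype X] {n : ℕ}

structure HasCausalMarginals (n : ℕ) (p : (Fin n → X) → (Fin (n - 1) → Y) → ℝ) : Prop where
  nonneg : ∀ x y, 0 ≤ p x y
  marginal_zero : ∀ x y, prefixMarginal (p · y) 0 x = 1
  marginal_congr : ∀ i x y y', (∀ j : Fin (n - 1), j.1 + 1 < i → y j = y' j) →
    prefixMarginal (p · y) i x = prefixMarginal (p · y') i x

lemma IsCausalCond.hasCausalMarginals {p : (Fin n → X) → (Fin (n - 1) → Y) → ℝ}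
    (hp : IsCausalCond n p) : HasCausalMarginals n p := by
  classical
  obtain ⟨c, hc0, hc1, hpc⟩ := hp
  let F (y : Fin (n - 1) → Y) (x : Fin n → X) (j : Fin n) : ℝ :=
    c j (x j) (fun k => x ⟨k.1, by omega⟩) (fun k => y ⟨k.1, by omega⟩)
  have hmarg : ∀ i x y, prefixMarginal (p · y) i x = ∏ j, if j.1 < i then F y x j else 1 := by
    intro i x y
    rw [← prefixMarginal_prod (F := F y) ?_ ?_ i x]
    · simp only [hpc, F]
    · intro x x' j h
      simp only [F, h j le_rfl]
      congr 1
      exact funext fun k => h _ (Fin.mk_le_mk.mpr k.2.le)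
    · intro x j
      simp only [F, Function.update_self]
      convert hc1 j (fun k => x ⟨k.1, by omega⟩) (fun k => y ⟨k.1, by omega⟩) using 3 with a
      exact funext fun k => Function.update_of_ne (Fin.ne_of_lt k.2) _ _
  refine ⟨fun x y => hpc x y ▸ prod_nonneg fun j _ => hc0 _ _ _ _,
    fun x y => by simp [hmarg], fun i x y y' hy => ?_⟩
  rw [hmarg, hmarg]
  refine prod_congr rfl fun j _ => ?_
  split_ifs with hj
  · simp only [F]
    congr 1
    exact funext fun k => hy _ (by simp only; omega)
  · rfl

lemma HasCausalMarginals.isCausalCond [Nonempty X] [Nonempty Y]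
    {p : (Fin n → X) → (Fin (n - 1) → Y) → ℝ} (hp : HasCausalMarginals n p) :
    IsCausalCond n p := by
  classical
  -- The `i`-th factor is the conditional pmf `M (i + 1) / M i` of `x_i` given the prefixes,
  -- uniform where `M i` vanishes; the coordinates of `y` beyond `yⁱ` do not matter by
  -- `marginal_congr`, so they are filled in arbitrarily.
  let M (i : Fin n) (a : X) (xs : Fin i → X) (ys : Fin i → Y) (k : ℕ) : ℝ :=
    prefixMarginal (p · (extendPrefix (Classical.arbitrary Y) ys (n - 1))) k (extendPrefix a xs n)
  have hM : ∀ (i : Fin n) x y, ∀ k ≤ i.1 + 1,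
      M i (x i) (fun j => x ⟨j.1, by omega⟩) (fun j => y ⟨j.1, by omega⟩) k
        = prefixMarginal (p · y) k x := by
    intro i x y k hk
    dsimp only [M]
    refine (hp.marginal_congr k _ _ y fun j hj => ?_).trans
      (prefixMarginal_congr _ fun j hj => ?_)
    · exact extendPrefix_of_lt _ _ (by omega)
    rcases (Nat.lt_succ_iff_lt_or_eq.mp (lt_of_lt_of_le hj hk)) with hj | hj
    · exact extendPrefix_of_lt _ _ hj
    · obtain rfl : j = i := Fin.ext hj
      exact dif_neg (lt_irrefl _)
  refine ⟨fun i a xs ys =>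
    if M i a xs ys i = 0 then (Fintype.card X : ℝ)⁻¹ else M i a xs ys (i + 1) / M i a xs ys i,
    fun i a xs ys => ?_, fun i xs ys => ?_, fun x y => ?_⟩
  · dsimp only
    split_ifs
    · positivity
    · exact div_nonneg (prefixMarginal_nonneg (hp.nonneg · _) _ _)
        (prefixMarginal_nonneg (hp.nonneg · _) _ _)
  · obtain ⟨a₀⟩ := ‹Nonempty X›
    have hM_const : ∀ a, M i a xs ys i = M i a₀ xs ys i :=
      fun a => prefixMarginal_extendPrefix_congr _ xs a a₀
    simp_rw [hM_const]
    split_ifs with h0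
    · simp
    · rw [← sum_div, div_eq_one_iff_eq h0]
      exact sum_prefixMarginal_extendPrefix _ i.2 xs a₀
  · let a (k : ℕ) : ℝ := prefixMarginal (p · y) k x
    let g (k : ℕ) : ℝ := if a k = 0 then (Fintype.card X : ℝ)⁻¹ else a (k + 1) / a k
    have hg : ∀ k < n, a (k + 1) = a k * g k := by
      intro k hk
      by_cases h0 : a k = 0
      · have : a (k + 1) = 0 := le_antisymm (h0 ▸ prefixMarginal_succ_le (hp.nonneg · y) k x)
          (prefixMarginal_nonneg (hp.nonneg · y) _ _)
        rw [this, h0, zero_mul]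
      · simp only [g, if_neg h0, mul_div_cancel₀ _ h0]
    calc p x y = a n := (prefixMarginal_of_le (p · y) le_rfl x).symm
      _ = ∏ k ∈ range n, g k := (prod_range_induction g a (hp.marginal_zero x y) n hg).symm
      _ = _ := by
        rw [← Fin.prod_univ_eq_prod_range]
        refine prod_congr rfl fun i _ => ?_
        dsimp only
        rw [hM i x y i (by omega), hM i x y (i + 1) le_rfl]

lemma HasCausalMarginals.linear_comb {p₁ p₂ : (Fin n → X) → (Fin (n - 1) → Y) → ℝ}
    (h₁ : HasCausalMarginals n p₁) (h₂ : HasCausalMarginals n p₂) {a b : ℝ} (hab : a + b = 1)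
    (hnonneg : ∀ x y, 0 ≤ a * p₁ x y + b * p₂ x y) :
    HasCausalMarginals n fun x y => a * p₁ x y + b * p₂ x y where
  nonneg := hnonneg
  marginal_zero x y := by
    rw [prefixMarginal_linear_comb, h₁.marginal_zero, h₂.marginal_zero, mul_one, mul_one, hab]
  marginal_congr i x y y' hy := by
    rw [prefixMarginal_linear_comb, prefixMarginal_linear_comb, h₁.marginal_congr i x y y' hy,
      h₂.marginal_congr i x y y' hy]

lemma hasCausalMarginals_const {r : (Fin n → X) → ℝ} (hr0 : ∀ x, 0 ≤ r x)
    (hr1 : ∑ x, r x = 1) : HasCausalMarginals n fun x (_ : Fin (n - 1) → Y) => r x where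
  nonneg x _ := hr0 x
  marginal_zero x _ := by rw [prefixMarginal_zero, hr1]
  marginal_congr _ _ _ _ _ := rfl

end Causal

lemma dirInfo_linear_comb {X Y : Type*} [Fintype X] [Fintype Y] {n : ℕ}
    {p₁ p₂ : (Fin n → X) → (Fin (n - 1) → Y) → ℝ} {q : (Fin n → X) → (Fin n → Y) → ℝ}
    (hout : ∀ y, ∑ x, p₁ x (pref n y) * q x y = ∑ x, p₂ x (pref n y) * q x y)
    {a b : ℝ} (hab : a + b = 1) :
    dirInfo n (fun x y => a * p₁ x y + b * p₂ x y) q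
      = a * dirInfo n p₁ q + b * dirInfo n p₂ q := by
  have hout' : ∀ y, ∑ x, (a * p₁ x (pref n y) + b * p₂ x (pref n y)) * q x y
      = ∑ x, p₁ x (pref n y) * q x y := by
    intro y
    simp only [add_mul, mul_assoc, sum_add_distrib, ← mul_sum, ← hout y]
    rw [← add_mul, hab, one_mul]
  simp only [dirInfo, hout', ← hout, mul_sum, ← sum_add_distrib]
  refine sum_congr rfl fun x _ => sum_congr rfl fun y _ => by ring

theorem stmt_3_general {X Y : Type*} [Fintype X] [Fintype Y] (n : ℕ) (hn : 1 ≤ n)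
    (q : (Fin n → X) → (Fin n → Y) → ℝ)
    (p : (Fin n → X) → (Fin (n - 1) → Y) → ℝ) (hp : IsCausalCond n p)
    (hpos : ∀ x y', 0 < p x y')
    (hmax : ∀ p', IsCausalCond n p' → dirInfo n p' q ≤ dirInfo n p q)
    (r : (Fin n → X) → ℝ) (hr0 : ∀ x, 0 ≤ r x) (hr1 : (∑ x, r x) = 1)
    (hout : ∀ y : Fin n → Y, (∑ x, q x y * p x (pref n y)) = ∑ x, q x y * r x) :
    dirInfo n (fun x _ => r x) q = dirInfo n p q ∧
    ∀ r' : (Fin n → X) → ℝ, (∀ x, 0 ≤ r' x) → (∑ x, r' x) = 1 →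
      dirInfo n (fun x _ => r' x) q ≤ dirInfo n (fun x _ => r x) q := by
  rcases isEmpty_or_nonempty Y with hY | hY
  · have : IsEmpty (Fin n → Y) := ⟨fun y => hY.false (y ⟨0, hn⟩)⟩
    simp [dirInfo]
  obtain ⟨x₀, -⟩ := exists_ne_zero_of_sum_ne_zero (hr1 ▸ one_ne_zero : ∑ x, r x ≠ 0)
  have : Nonempty X := ⟨x₀ ⟨0, hn⟩⟩
  have hconst : ∀ r' : (Fin n → X) → ℝ, (∀ x, 0 ≤ r' x) → ∑ x, r' x = 1 →
      IsCausalCond n fun x (_ : Fin (n - 1) → Y) => r' x :=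
    fun r' h0 h1 => (hasCausalMarginals_const h0 h1).isCausalCond
  obtain ⟨⟨xm, ym⟩, hmin⟩ :=
    Finite.exists_min fun z : (Fin n → X) × (Fin (n - 1) → Y) => p z.1 z.2
  set ε := p xm ym
  have hε : 0 < ε := hpos xm ym
  have hr_le : ∀ x, r x ≤ 1 := fun x => hr1 ▸ single_le_sum (fun x _ => hr0 x) (mem_univ x)
  have hp' : IsCausalCond n fun x y => (1 + ε) * p x y + -ε * r x := by
    refine (hp.hasCausalMarginals.linear_comb (hasCausalMarginals_const hr0 hr1) (by ring)
      fun x y => ?_).isCausalCond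
    nlinarith [hmin (x, y), hr_le x, hpos x y]
  have hI := dirInfo_linear_comb (q := q) (p₂ := fun x (_ : Fin (n - 1) → Y) => r x)
    (fun y => by simpa only [mul_comm] using hout y) (a := 1 + ε) (b := -ε) (by ring)
  have h₁ := hmax _ hp'
  have h₂ := hmax _ (hconst r hr0 hr1)
  have heq : dirInfo n (fun x _ => r x) q = dirInfo n p q := by nlinarith
  exact ⟨heq, fun r' h0 h1 => heq ▸ hmax _ (hconst r' h0 h1)⟩

/-- **Corollary 1 of the paper.**  Let `p⋆(xⁿ‖yⁿ⁻¹)` be an everywhere-positive causal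
conditioning pmf maximizing the directed information over all causal conditioning pmfs,
with induced output pmf `p⋆(yⁿ) = ∑_{xⁿ} q(yⁿ‖xⁿ) p⋆(xⁿ‖yⁿ⁻¹)`.  If a pmf `r` on `Xⁿ`
induces the same output pmf, then the maximum of `I(Xⁿ → Yⁿ)` over plain input pmfs
(inputs not using feedback) equals the maximum over all causal conditioning pmfs, and
`r` attains it. -/
theorem stmt_3 {X Y : Type*} [Fintype X] [Fintype Y] (n : ℕ) (hn : 1 ≤ n)
    (q : (Fin n → X) → (Fin n → Y) → ℝ) (hq : IsChannelCausalCond n q)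
    (p : (Fin n → X) → (Fin (n - 1) → Y) → ℝ) (hp : IsCausalCond n p)
    (hpos : ∀ x y', 0 < p x y')
    (hmax : ∀ p', IsCausalCond n p' → dirInfo n p' q ≤ dirInfo n p q)
    (r : (Fin n → X) → ℝ) (hr0 : ∀ x, 0 ≤ r x) (hr1 : (∑ x, r x) = 1)
    (hout : ∀ y : Fin n → Y, (∑ x, q x y * p x (pref n y)) = ∑ x, q x y * r x) :
    dirInfo n (fun x _ => r x) q = dirInfo n p q ∧
    ∀ r' : (Fin n → X) → ℝ, (∀ x, 0 ≤ r' x) → (∑ x, r' x) = 1 →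
      dirInfo n (fun x _ => r' x) q ≤ dirInfo n (fun x _ => r x) q :=
  stmt_3_general n hn q p hp hpos hmax r hr0 hr1 hout
end

section
/- Fix α ∈ (0,1), let ᾱ = 1-α and c = (1 + ᾱ·α^{α/ᾱ})^{-1}. Define P₀, P₁ : {0,1}^n → ℝ recursively by P₀(x⁰) = P₁(x⁰) = 1 and, for n ≥ 1: P₀(x^n) = c·( P₀(x₂^n) - α^{1/ᾱ}·P₁(x₂^n) ) if x₁ = 0 and P₀(x^n) = c·α^{α/ᾱ}·P₁(x₂^n) if x₁ = 1; P₁(x^n) = c·α^{α/ᾱ}·P₀(x₂^n) if x₁ = 0 and P₁(x^n) = c·( P₁(x₂^n) - α^{1/ᾱ}·P₀(x₂^n) ) if x₁ = 1. Then for every n ≥ 0 and s ∈ {0,1}, P_s is a valid pmf on {0,1}^n: P_s(x^n) ≥ 0 for all x^n and ∑_{x^n} P_s(x^n) = 1. In particular, for all n and all x^n: P₀(x^n) ≥ α^{1/ᾱ}·P₁(x^n) and P₁(x^n) ≥ α^{1/ᾱ}·P₀(x^n). -/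
open Finset

/-!
Writing `a = α^(α/ᾱ)` and `b = α^(1/ᾱ) = α·a`, the recursion applies to the pair `(P₀, P₁)` one of
the linear maps `(p, q) ↦ c·(p - b q, a p)` or `(p, q) ↦ c·(a q, q - b p)`. These maps preserve the
cone `{(p, q) | 0 ≤ p, 0 ≤ q, m q ≤ p, m p ≤ q}` when `m ∈ [b, 1]` is a root of
`b m² - m + a` (using `b ≤ a`); such a root exists because `a + b = a (1 + α) ≤ 1`, which is weighted AM-GM
`α^α (1 + α)^ᾱ ≤ α·α + ᾱ·(1 + α) = 1`. Since `(1, 1)` lies in the cone, every `P_s` is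
nonnegative, and the cone condition with `b ≤ m` gives the ratio bounds. Summing out `x₁` maps the
pair of sums `(σ₀, σ₁)` to `c·(σ₀ + (a - b) σ₁, (a - b) σ₀ + σ₁)`, which fixes `(1, 1)` since
`c (1 + a - b) = 1`.
-/

namespace PostChannel

structure InRatioCone (m p q : ℝ) : Prop where
  left_nonneg : 0 ≤ p
  right_nonneg : 0 ≤ q
  mul_right_le : m * q ≤ p
  mul_left_le : m * p ≤ q

namespace InRatioCone

variable {a b c m m' p q : ℝ}

theorem one_one (hm : m ≤ 1) : InRatioCone m 1 1 :=
  ⟨zero_le_one, zero_le_one, by linarith, by linarith⟩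

theorem swap (h : InRatioCone m p q) : InRatioCone m q p :=
  ⟨h.right_nonneg, h.left_nonneg, h.mul_left_le, h.mul_right_le⟩

theorem mono (h : InRatioCone m p q) (hm : m' ≤ m) : InRatioCone m' p q :=
  ⟨h.left_nonneg, h.right_nonneg,
    (mul_le_mul_of_nonneg_right hm h.right_nonneg).trans h.mul_right_le,
    (mul_le_mul_of_nonneg_right hm h.left_nonneg).trans h.mul_left_le⟩

theorem smul (h : InRatioCone m p q) (hc : 0 ≤ c) : InRatioCone m (c * p) (c * q) :=
  ⟨mul_nonneg hc h.left_nonneg, mul_nonneg hc h.right_nonneg,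
    by nlinarith [mul_le_mul_of_nonneg_left h.mul_right_le hc],
    by nlinarith [mul_le_mul_of_nonneg_left h.mul_left_le hc]⟩

theorem step (h : InRatioCone m p q) (ha : 0 ≤ a) (hb : 0 < b) (hbm : b ≤ m)
    (h_upper : m - b * m ^ 2 ≤ a) (h_lower : a * m ^ 2 + b ≤ m) :
    InRatioCone m (p - b * q) (a * p) where
  left_nonneg := by nlinarith [mul_le_mul_of_nonneg_right hbm h.right_nonneg, h.mul_right_le]
  right_nonneg := mul_nonneg ha h.left_nonneg
  mul_right_le := by
    refine le_of_mul_le_mul_left ?_ (hb.trans_le hbm)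
    nlinarith [mul_le_mul_of_nonneg_left h.mul_right_le hb.le,
      mul_nonneg h.left_nonneg (sub_nonneg.2 h_lower)]
  mul_left_le := by
    nlinarith [mul_le_mul_of_nonneg_left h.mul_left_le (mul_nonneg (hb.le.trans hbm) hb.le),
      mul_le_mul_of_nonneg_right h_upper h.left_nonneg]

end InRatioCone

theorem exists_cone_ratio {a b : ℝ} (hb : 0 < b) (hba : b ≤ a) (hab : a + b ≤ 1) :
    ∃ m, b ≤ m ∧ m ≤ 1 ∧ m - b * m ^ 2 ≤ a ∧ a * m ^ 2 + b ≤ m := by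
  obtain ⟨m, ⟨hm0, hm1⟩, hroot⟩ : ∃ m ∈ Set.Icc (0 : ℝ) 1, b * m ^ 2 - m + a = 0 :=
    intermediate_value_Icc' zero_le_one (by fun_prop) ⟨by linarith, by linarith⟩
  have hlower : a * m ^ 2 + b - m = (a - b) * (m ^ 2 - 1) := by linear_combination hroot
  refine ⟨m, by nlinarith, hm1, by linarith, ?_⟩
  nlinarith [mul_nonpos_of_nonneg_of_nonpos (sub_nonneg.2 hba) (by nlinarith : m ^ 2 - 1 ≤ 0)]

theorem rpow_div_one_sub_mul_one_add_le_one {α : ℝ} (h0 : 0 ≤ α) (h1 : α < 1) :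
    α ^ (α / (1 - α)) * (1 + α) ≤ 1 := by
  have hα : 0 < 1 - α := sub_pos.2 h1
  have amgm : α ^ α * (1 + α) ^ (1 - α) ≤ 1 :=
    calc α ^ α * (1 + α) ^ (1 - α) ≤ α * α + (1 - α) * (1 + α) :=
          Real.geom_mean_le_arith_mean2_weighted h0 hα.le h0 (by linarith) (by ring)
      _ = 1 := by ring
  calc α ^ (α / (1 - α)) * (1 + α) = (α ^ α * (1 + α) ^ (1 - α)) ^ (1 - α)⁻¹ := by
        rw [Real.mul_rpow (by positivity) (by positivity), ← Real.rpow_mul h0,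
          ← Real.rpow_mul (by linarith), mul_inv_cancel₀ hα.ne', Real.rpow_one, div_eq_mul_inv]
    _ ≤ 1 := Real.rpow_le_one (by positivity) amgm (inv_nonneg.2 hα.le)

theorem sum_fun_fin_succ {β M : Type*} [Fintype β] [AddCommMonoid M] {n : ℕ}
    (f : (Fin (n + 1) → β) → M) : ∑ x, f x = ∑ v, ∑ y : Fin n → β, f (Fin.cons v y) := by
  rw [← Fintype.sum_prod_type']
  exact (Fintype.sum_equiv (Fin.consEquiv fun _ => β) _ _ fun _ => rfl).symm

section Recursion

variable {a b c : ℝ} {P : Bool → (n : ℕ) → (Fin n → Bool) → ℝ}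
  (hP0 : ∀ s (x : Fin 0 → Bool), P s 0 x = 1)
  (hPf : ∀ n (x : Fin (n + 1) → Bool), P false (n + 1) x =
    if x 0 = false then
      c * (P false n (fun j => x j.succ) - b * P true n (fun j => x j.succ))
    else c * a * P true n (fun j => x j.succ))
  (hPt : ∀ n (x : Fin (n + 1) → Bool), P true (n + 1) x =
    if x 0 = false then c * a * P false n (fun j => x j.succ)
    else c * (P true n (fun j => x j.succ) - b * P false n (fun j => x j.succ)))
include hP0 hPf hPt

theorem inRatioCone_of_recursion {m : ℝ} (ha : 0 ≤ a) (hb : 0 < b) (hc : 0 ≤ c)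
    (hbm : b ≤ m) (hm1 : m ≤ 1) (h_upper : m - b * m ^ 2 ≤ a) (h_lower : a * m ^ 2 + b ≤ m) :
    ∀ n x, InRatioCone m (P false n x) (P true n x) := by
  intro n
  induction n with
  | zero => intro x; simpa only [hP0] using InRatioCone.one_one hm1
  | succ n ih =>
    intro x
    have hcone := ih (fun j => x j.succ)
    rw [hPf, hPt]
    cases x 0
    · simpa only [if_true, mul_assoc] using
        ((hcone.step ha hb hbm h_upper h_lower).smul hc)
    · simpa only [Bool.true_eq_false, if_false, mul_assoc] using
        ((hcone.swap.step ha hb hbm h_upper h_lower).smul hc).swap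

theorem sum_eq_one_of_recursion (hcab : c * (1 + a - b) = 1) :
    ∀ n, (∑ x, P false n x) = 1 ∧ (∑ x, P true n x) = 1 := by
  intro n
  induction n with
  | zero => simp [hP0]
  | succ n ih =>
    obtain ⟨hf, ht⟩ := ih
    rw [sum_fun_fin_succ (P false (n + 1)), sum_fun_fin_succ (P true (n + 1))]
    simp only [Fintype.sum_bool, hPf, hPt, Fin.cons_zero,
      Fin.cons_succ, if_true, Bool.true_eq_false, if_false, ← mul_sum, sum_sub_distrib, hf, ht]
    constructor <;> linear_combination hcab

end Recursion

end PostChannel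

open PostChannel

/-- **Validity of the recursively constructed nonfeedback input distributions for the
POST(α) channel.**  Fix `α ∈ (0,1)`, `ᾱ = 1-α`, `c = (1 + ᾱ·α^(α/ᾱ))⁻¹`, and let
`P s n : {0,1}ⁿ → ℝ` (for `s ∈ {0,1}`, `0 ↦ false`, `1 ↦ true`) be defined recursively
by `P s 0 ≡ 1` and
`P 0 (x₁, x₂ⁿ) = c·(P 0 (x₂ⁿ) - α^(1/ᾱ)·P 1 (x₂ⁿ))` if `x₁ = 0`,
`= c·α^(α/ᾱ)·P 1 (x₂ⁿ)` if `x₁ = 1`;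
`P 1 (x₁, x₂ⁿ) = c·α^(α/ᾱ)·P 0 (x₂ⁿ)` if `x₁ = 0`,
`= c·(P 1 (x₂ⁿ) - α^(1/ᾱ)·P 0 (x₂ⁿ))` if `x₁ = 1`.
Then each `P s n` is a valid pmf (nonnegative, summing to `1`); in particular
`P 0 (xⁿ) ≥ α^(1/ᾱ)·P 1 (xⁿ)` and `P 1 (xⁿ) ≥ α^(1/ᾱ)·P 0 (xⁿ)` for all `n`, `xⁿ`. -/
theorem stmt_8 (α c : ℝ) (h0 : 0 < α) (h1 : α < 1)
    (hc : c = (1 + (1 - α) * α ^ (α / (1 - α)))⁻¹)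
    (P : Bool → (n : ℕ) → (Fin n → Bool) → ℝ)
    (hP0 : ∀ s (x : Fin 0 → Bool), P s 0 x = 1)
    (hPf : ∀ n (x : Fin (n + 1) → Bool), P false (n + 1) x =
      if x 0 = false then
        c * (P false n (fun j => x j.succ) - α ^ (1 / (1 - α)) * P true n (fun j => x j.succ))
      else c * α ^ (α / (1 - α)) * P true n (fun j => x j.succ))
    (hPt : ∀ n (x : Fin (n + 1) → Bool), P true (n + 1) x =
      if x 0 = false then c * α ^ (α / (1 - α)) * P false n (fun j => x j.succ)
      else
        c * (P true n (fun j => x j.succ) - α ^ (1 / (1 - α)) * P false n (fun j => x j.succ))) :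
    (∀ s n (x : Fin n → Bool), 0 ≤ P s n x) ∧
    (∀ s n, (∑ x : Fin n → Bool, P s n x) = 1) ∧
    (∀ n (x : Fin n → Bool),
      α ^ (1 / (1 - α)) * P true n x ≤ P false n x ∧
      α ^ (1 / (1 - α)) * P false n x ≤ P true n x) := by
  have hb_eq : α ^ (1 / (1 - α)) = α * α ^ (α / (1 - α)) := by
    rw [show 1 / (1 - α) = α / (1 - α) + 1 by field_simp [(sub_pos.2 h1).ne']; ring,
      Real.rpow_add_one h0.ne', mul_comm]
  set a := α ^ (α / (1 - α))
  set b := α ^ (1 / (1 - α))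
  have ha : 0 < a := Real.rpow_pos_of_pos h0 _
  have hb : 0 < b := hb_eq ▸ mul_pos h0 ha
  have hab : a + b ≤ 1 := by
    nlinarith [rpow_div_one_sub_mul_one_add_le_one h0.le h1]
  have hcab : c * (1 + a - b) = 1 := by
    rw [hc, hb_eq, show 1 + a - α * a = 1 + (1 - α) * a by ring]
    exact inv_mul_cancel₀ (by nlinarith)
  have hc0 : 0 ≤ c := hc ▸ inv_nonneg.2 (by nlinarith)
  obtain ⟨m, hbm, hm1, h_upper, h_lower⟩ := exists_cone_ratio hb (by nlinarith) hab
  have hcone := inRatioCone_of_recursion hP0 hPf hPt ha.le hb hc0 hbm hm1 h_upper h_lower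
  have hsum := sum_eq_one_of_recursion hP0 hPf hPt hcab
  refine ⟨fun s n x => ?_, fun s n => ?_, fun n x => ?_⟩
  · cases s
    exacts [(hcone n x).left_nonneg, (hcone n x).right_nonneg]
  · cases s
    exacts [(hsum n).1, (hsum n).2]
  · have hb_cone := (hcone n x).mono hbm
    exact ⟨hb_cone.mul_right_le, hb_cone.mul_left_le⟩
end

section
/- Fix α ∈ (0,1) and write ᾱ = 1-α. Let D = 1 - 4α^{(α+1)/ᾱ} (which is nonnegative). Then the interval [ (1+√D)/(2α^{α/ᾱ}), (1+√D)/(2α^{1/ᾱ}) ] is nonempty, and any β in this interval satisfies 1 ≤ β ≤ α^{-1/ᾱ} and has the following property: for all real numbers u₀ ≥ 0 and u₁ ≥ 0 with β·u₁ ≥ u₀ and β·u₀ ≥ u₁, the following four inequalities hold: (i) β·( u₀ - α^{1/ᾱ}·u₁ ) ≥ α^{α/ᾱ}·u₀; (ii) β·α^{α/ᾱ}·u₁ ≥ u₁ - α^{1/ᾱ}·u₀; (iii) β·α^{α/ᾱ}·u₀ ≥ u₀ - α^{1/ᾱ}·u₁; (iv) β·( u₁ - α^{1/ᾱ}·u₀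 ) ≥ α^{α/ᾱ}·u₁. -/
/-!
Put `a = α^(α/ᾱ)` and `b = α^(1/ᾱ) = α a`, so that `α^((α+1)/ᾱ) = a b`. Weighted AM–GM gives
`α^α (1+α)^ᾱ ≤ α·α + ᾱ(1+α) = 1`, i.e. `a + b ≤ 1`, hence `4ab ≤ (a+b)² ≤ 1`.
The endpoints of the interval are the larger roots of `a x² - x + b` and of `b x² - x + a`, and
`a + b ≤ 1` says that `1` lies between the roots of both. So every `β` in the interval satisfies
`1 ≤ β` and `b β² + a ≤ β ≤ a β² + b`, and (i)–(iv) follow from these two quadratic inequalities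
combined with `u₁ ≤ β u₀` and `u₀ ≤ β u₁`.
-/

open Real

section QuadraticRoots

variable {p q x : ℝ}

theorem le_mul_sq_add_of_root_le (hp : 0 < p) (hpq : 4 * (p * q) ≤ 1)
    (hx : (1 + √(1 - 4 * (p * q))) / (2 * p) ≤ x) : x ≤ p * x ^ 2 + q := by
  have hs : √(1 - 4 * (p * q)) ^ 2 = 1 - 4 * (p * q) := sq_sqrt (by linarith)
  have hs0 := sqrt_nonneg (1 - 4 * (p * q))
  rw [div_le_iff₀ (by positivity)] at hx
  -- `4p (p x² - x + q) = (2px - 1)² - (1 - 4pq)`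
  have : 0 ≤ p * (p * x ^ 2 - x + q) := by nlinarith
  nlinarith [(mul_nonneg_iff_of_pos_left hp).1 this]

theorem mul_sq_add_le_of_mem_roots (hp : 0 < p) (hpq : 4 * (p * q) ≤ 1)
    (hlo : (1 - √(1 - 4 * (p * q))) / (2 * p) ≤ x)
    (hhi : x ≤ (1 + √(1 - 4 * (p * q))) / (2 * p)) : p * x ^ 2 + q ≤ x := by
  have hs : √(1 - 4 * (p * q)) ^ 2 = 1 - 4 * (p * q) := sq_sqrt (by linarith)
  rw [div_le_iff₀ (by positivity)] at hlo
  rw [le_div_iff₀ (by positivity)] at hhi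
  have : p * (p * x ^ 2 - x + q) ≤ 0 := by nlinarith
  nlinarith [(mul_nonpos_iff_pos_imp_nonpos.1 this).1 hp]

theorem abs_two_mul_sub_one_le_sqrt (hp : 0 ≤ p) (hpq : p + q ≤ 1) :
    |2 * p - 1| ≤ √(1 - 4 * (p * q)) :=
  abs_le_sqrt (by nlinarith)

end QuadraticRoots

section InductionStep

variable {a b β u₀ u₁ : ℝ}

theorem le_mul_sub_of_mul_sq_add_le (hb : 0 ≤ b) (hβ : 0 ≤ β) (hQ : b * β ^ 2 + a ≤ β)
    (hu₀ : 0 ≤ u₀) (h₁₀ : u₁ ≤ β * u₀) : a * u₀ ≤ β * (u₀ - b * u₁) := by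
  have : β * b * u₁ ≤ β * b * (β * u₀) := mul_le_mul_of_nonneg_left h₁₀ (by positivity)
  nlinarith [mul_le_mul_of_nonneg_right hQ hu₀]

theorem sub_le_mul_of_le_mul_sq_add (hb : 0 ≤ b) (hβ : 0 < β) (hR : β ≤ a * β ^ 2 + b)
    (hu₁ : 0 ≤ u₁) (h₁₀ : u₁ ≤ β * u₀) : u₁ - b * u₀ ≤ β * (a * u₁) := by
  have : b * u₁ ≤ b * (β * u₀) := mul_le_mul_of_nonneg_left h₁₀ hb
  refine le_of_mul_le_mul_left ?_ hβ
  nlinarith [mul_le_mul_of_nonneg_right hR hu₁]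

end InductionStep

section Exponents

variable {α : ℝ}

theorem rpow_add_one_div_one_sub (h0 : 0 < α) :
    α ^ ((α + 1) / (1 - α)) = α ^ (α / (1 - α)) * α ^ (1 / (1 - α)) := by
  rw [← rpow_add h0, add_div]

theorem rpow_one_div_one_sub (h0 : 0 < α) (h1 : α < 1) :
    α ^ (1 / (1 - α)) = α ^ (α / (1 - α)) * α := by
  have : 1 / (1 - α) = α / (1 - α) + 1 := by rw [div_add_one (by linarith), add_sub_cancel]
  rw [this, rpow_add h0, rpow_one]

theorem rpow_div_one_sub_mul_one_add_le_one (h0 : 0 ≤ α) (h1 : α < 1) :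
    α ^ (α / (1 - α)) * (1 + α) ≤ 1 := by
  have hᾱ : 0 < 1 - α := by linarith
  have amgm : α ^ α * (1 + α) ^ (1 - α) ≤ 1 := by
    have := geom_mean_le_arith_mean2_weighted (p₂ := 1 + α) h0 hᾱ.le h0 (by linarith)
      (add_sub_cancel α 1)
    nlinarith
  have := rpow_le_one (by positivity) amgm (one_div_nonneg.2 hᾱ.le)
  rwa [mul_rpow (by positivity) (by positivity), ← rpow_mul h0, ← rpow_mul (by linarith),
    mul_one_div, mul_one_div_cancel hᾱ.ne', rpow_one] at this

end Exponents

/-- Fix `α ∈ (0,1)`, write `ᾱ = 1-α` and `D = 1 - 4·α^((α+1)/ᾱ)` (which is nonnegative).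
Then the interval `[(1+√D)/(2α^(α/ᾱ)), (1+√D)/(2α^(1/ᾱ))]` is nonempty, and any `β` in it
satisfies `1 ≤ β ≤ α^(-1/ᾱ)` and the four induction-step inequalities for all
`u₀, u₁ ≥ 0` with `β·u₁ ≥ u₀` and `β·u₀ ≥ u₁`. -/
theorem stmt_9 (α : ℝ) (h0 : 0 < α) (h1 : α < 1) :
    0 ≤ 1 - 4 * α ^ ((α + 1) / (1 - α)) ∧
    (1 + Real.sqrt (1 - 4 * α ^ ((α + 1) / (1 - α)))) / (2 * α ^ (α / (1 - α))) ≤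
      (1 + Real.sqrt (1 - 4 * α ^ ((α + 1) / (1 - α)))) / (2 * α ^ (1 / (1 - α))) ∧
    ∀ β : ℝ,
      (1 + Real.sqrt (1 - 4 * α ^ ((α + 1) / (1 - α)))) / (2 * α ^ (α / (1 - α))) ≤ β →
      β ≤ (1 + Real.sqrt (1 - 4 * α ^ ((α + 1) / (1 - α)))) / (2 * α ^ (1 / (1 - α))) →
      (1 ≤ β ∧ β ≤ α ^ (-(1 / (1 - α)))) ∧
      ∀ u₀ u₁ : ℝ, 0 ≤ u₀ → 0 ≤ u₁ → u₀ ≤ β * u₁ → u₁ ≤ β * u₀ →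
        α ^ (α / (1 - α)) * u₀ ≤ β * (u₀ - α ^ (1 / (1 - α)) * u₁) ∧
        u₁ - α ^ (1 / (1 - α)) * u₀ ≤ β * (α ^ (α / (1 - α)) * u₁) ∧
        u₀ - α ^ (1 / (1 - α)) * u₁ ≤ β * (α ^ (α / (1 - α)) * u₀) ∧
        α ^ (α / (1 - α)) * u₁ ≤ β * (u₁ - α ^ (1 / (1 - α)) * u₀) := by
  rw [rpow_neg h0.le, rpow_add_one_div_one_sub h0]
  set a := α ^ (α / (1 - α))
  set b := α ^ (1 / (1 - α)) with hb_def
  have ha : 0 < a := rpow_pos_of_pos h0 _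
  have hb : 0 < b := rpow_pos_of_pos h0 _
  have hba : b ≤ a := by rw [hb_def, rpow_one_div_one_sub h0 h1]; nlinarith
  have hab : a + b ≤ 1 := by
    rw [hb_def, rpow_one_div_one_sub h0 h1]; linarith [rpow_div_one_sub_mul_one_add_le_one h0.le h1]
  have hD : 4 * (a * b) ≤ 1 := by nlinarith [sq_nonneg (a - b)]
  set s := √(1 - 4 * (a * b))
  have hs1 : s ≤ 1 := sqrt_le_one.2 (by linarith [mul_pos ha hb])
  refine ⟨by linarith, div_le_div_of_nonneg_left (by positivity) (by positivity) (by linarith), ?_⟩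
  intro β hβa hβb
  have hβ1 : 1 ≤ β := by
    refine le_trans ?_ hβa
    rw [le_div_iff₀ (by positivity)]
    linarith [le_abs_self (2 * a - 1), abs_two_mul_sub_one_le_sqrt ha.le hab]
  have hR : β ≤ a * β ^ 2 + b := le_mul_sq_add_of_root_le ha hD hβa
  have hQ : b * β ^ 2 + a ≤ β := by
    have hb1 := abs_two_mul_sub_one_le_sqrt hb.le (by linarith : b + a ≤ 1)
    rw [mul_comm b a] at hb1
    refine mul_sq_add_le_of_mem_roots hb (by rwa [mul_comm b a]) (le_trans ?_ hβ1)
      (by rwa [mul_comm b a])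
    rw [div_le_iff₀ (by positivity), mul_comm b a]
    linarith [neg_abs_le (2 * b - 1)]
  refine ⟨⟨hβ1, hβb.trans ?_⟩, fun u₀ u₁ hu₀ hu₁ h₀₁ h₁₀ => ⟨?_, ?_, ?_, ?_⟩⟩
  · rw [div_le_iff₀ (by positivity)]; field_simp; linarith
  · exact le_mul_sub_of_mul_sq_add_le hb.le (by linarith) hQ hu₀ h₁₀
  · exact sub_le_mul_of_le_mul_sq_add hb.le (by linarith) hR hu₁ h₁₀
  · exact sub_le_mul_of_le_mul_sq_add hb.le (by linarith) hR hu₀ h₀₁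
  · exact le_mul_sub_of_mul_sq_add_le hb.le (by linarith) hQ hu₁ h₀₁
end

section
/- Let a, b ∈ (0,1) with a + b > 1 and a(1-a) ≤ b(1-b), and let γ = 2^{(H(b)-H(a))/(a+b-1)} where H is the binary entropy function. Write ā = 1-a, b̄ = 1-b, and D = γ²(ā+b)² - 4a·b̄ (which is nonnegative). Then there exists a real β satisfying simultaneously: (i) max( (ā/b̄)·γ, (γ(ā+b) - √D)/(2b̄) ) ≤ β ≤ (γ(ā+b) + √D)/(2b̄); (ii) (γ(ā+b) + √D)/(2a) ≤ β ≤ bγ/a; and (iii) 1 ≤ β ≤ min( a/(ā·γ), bγ/b̄ ). -/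
/-!
Put `m = (1 + a - b) / 2 ≥ 1/2` and `d = (a + b - 1) / 2`, so that `m - d = 1 - b` and
`m + d = a`. With natural logarithms, `log γ` is the slope `(H(m - d) - H(m + d)) / (2d)`.
The function `φ(t) = H(m - t) - H(m + t)` has derivative `log ((m² - t²) / ((1 - m)² - t²))`,
which increases in `t` because `m ≥ 1 - m`; hence `t φ'(0) ≤ φ(t) ≤ t φ'(t)`, i.e.
`a + (1 - b) ≤ γ (1 - a + b)` and `γ² (1 - a) b ≤ a (1 - b)`.

Take `β` to be the larger root of `a x² - γ (1 - a + b) x + (1 - b)`. By the first inequality,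
this quadratic and `(1 - b) x² - γ (1 - a + b) x + a` are nonpositive at `1`, so `1` lies between
the smaller root of the second one and `β`. Together with `a (1 - a) ≤ b (1 - b)`, the second
inequality gives `(1 - a) γ ≤ 1 - b`; on its own it gives `β ≤ c` for each upper bound `c`, since
the first quadratic is nonnegative at `c` and `c` lies right of its vertex.
-/

noncomputable def binEnt (x : ℝ) : ℝ := -x * Real.logb 2 x - (1 - x) * Real.logb 2 (1 - x)

open Real Set

theorem binEnt_eq_binEntropy_div_log_two (x : ℝ) : binEnt x = binEntropy x / log 2 := by
  simp only [binEnt, binEntropy, logb, log_inv]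
  ring

theorem two_rpow_binEnt_div (x y z : ℝ) :
    (2 : ℝ) ^ ((binEnt x - binEnt y) / z) = exp ((binEntropy x - binEntropy y) / z) := by
  rw [rpow_def_of_pos two_pos, binEnt_eq_binEntropy_div_log_two,
    binEnt_eq_binEntropy_div_log_two]
  congr 1
  field_simp

theorem hasDerivAt_binEntropy_sub_sub_binEntropy_add {m t : ℝ} (h₀ : 0 < m - t)
    (h₁ : m + t < 1) (ht : 0 ≤ t) :
    HasDerivAt (fun s => binEntropy (m - s) - binEntropy (m + s))
      (log ((m ^ 2 - t ^ 2) / ((1 - m) ^ 2 - t ^ 2))) t := by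
  have hsub := (hasDerivAt_binEntropy (p := m - t) (by linarith) (by linarith)).comp_const_sub m t
  have hadd := (hasDerivAt_binEntropy (p := m + t) (by linarith) (by linarith)).comp_const_add m t
  refine (hsub.sub hadd).congr_deriv ?_
  rw [show m ^ 2 - t ^ 2 = (m - t) * (m + t) by ring,
    show (1 - m) ^ 2 - t ^ 2 = (1 - (m + t)) * (1 - (m - t)) by ring,
    log_div (mul_pos h₀ (by linarith)).ne' (mul_pos (by linarith) (by linarith)).ne',
    log_mul (by linarith) (by linarith), log_mul (by linarith) (by linarith)]
  ring

theorem div_sub_sq_le_div_sub_sq {m s t : ℝ} (hm : 1 - m ≤ m) (hs : 0 ≤ s) (hst : s ≤ t)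
    (ht : t < 1 - m) :
    (m ^ 2 - s ^ 2) / ((1 - m) ^ 2 - s ^ 2) ≤ (m ^ 2 - t ^ 2) / ((1 - m) ^ 2 - t ^ 2) := by
  rw [div_le_div_iff₀ (by nlinarith) (by nlinarith)]
  nlinarith [mul_le_mul hst hst hs (hs.trans hst)]

section EntropyGap

variable {m d : ℝ}

theorem hasDerivAt_binEntropy_sub_sub_binEntropy_add_of_mem_Icc (hm : 1 - m ≤ m)
    (hd : d < 1 - m) {t : ℝ} (ht : t ∈ Icc 0 d) :
    HasDerivAt (fun s => binEntropy (m - s) - binEntropy (m + s))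
      (log ((m ^ 2 - t ^ 2) / ((1 - m) ^ 2 - t ^ 2))) t :=
  hasDerivAt_binEntropy_sub_sub_binEntropy_add (by linarith [ht.2]) (by linarith [ht.2]) ht.1

theorem mul_log_le_binEntropy_sub_sub_binEntropy_add (hm : 1 - m ≤ m) (hd₀ : 0 ≤ d)
    (hd : d < 1 - m) :
    2 * d * log (m / (1 - m)) ≤ binEntropy (m - d) - binEntropy (m + d) := by
  have hderiv := fun t (ht : t ∈ Icc 0 d) =>
    hasDerivAt_binEntropy_sub_sub_binEntropy_add_of_mem_Icc hm hd ht
  have hmvt := (convex_Icc 0 d).mul_sub_le_image_sub_of_le_deriv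
    (fun t ht => (hderiv t ht).continuousAt.continuousWithinAt)
    (fun t ht => (hderiv t (interior_subset ht)).differentiableAt.differentiableWithinAt)
    (C := log (m ^ 2 / (1 - m) ^ 2)) (fun t ht => by
      rw [interior_Icc] at ht
      rw [(hderiv t (Ioo_subset_Icc_self ht)).deriv]
      refine log_le_log (div_pos (by nlinarith) (by nlinarith)) ?_
      simpa using div_sub_sq_le_div_sub_sq hm le_rfl ht.1.le (by linarith [ht.2]))
    0 (left_mem_Icc.2 hd₀) d (right_mem_Icc.2 hd₀) hd₀
  rw [← div_pow, log_pow, Nat.cast_ofNat] at hmvt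
  simp only [sub_zero, add_zero, sub_self] at hmvt
  linarith

theorem binEntropy_sub_sub_binEntropy_add_le_mul_log (hm : 1 - m ≤ m) (hd₀ : 0 ≤ d)
    (hd : d < 1 - m) :
    binEntropy (m - d) - binEntropy (m + d)
      ≤ d * log ((m ^ 2 - d ^ 2) / ((1 - m) ^ 2 - d ^ 2)) := by
  have hderiv := fun t (ht : t ∈ Icc 0 d) =>
    hasDerivAt_binEntropy_sub_sub_binEntropy_add_of_mem_Icc hm hd ht
  have hmvt := (convex_Icc 0 d).image_sub_le_mul_sub_of_deriv_le
    (fun t ht => (hderiv t ht).continuousAt.continuousWithinAt)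
    (fun t ht => (hderiv t (interior_subset ht)).differentiableAt.differentiableWithinAt)
    (C := log ((m ^ 2 - d ^ 2) / ((1 - m) ^ 2 - d ^ 2))) (fun t ht => by
      rw [interior_Icc] at ht
      rw [(hderiv t (Ioo_subset_Icc_self ht)).deriv]
      have : 0 < (1 - m) ^ 2 - t ^ 2 := by nlinarith [ht.1, ht.2]
      refine log_le_log (div_pos (by nlinarith [ht.1, ht.2]) this) ?_
      exact div_sub_sq_le_div_sub_sq hm ht.1.le ht.2.le hd)
    0 (left_mem_Icc.2 hd₀) d (right_mem_Icc.2 hd₀) hd₀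
  simpa [mul_comm] using hmvt

end EntropyGap

section Slope

variable {a b : ℝ}

theorem add_one_sub_le_exp_binEntropy_slope_mul (hba : b ≤ a) (ha : a < 1) (hab : 1 < a + b) :
    a + (1 - b) ≤ exp ((binEntropy b - binEntropy a) / (a + b - 1)) * ((1 - a) + b) := by
  have h := mul_log_le_binEntropy_sub_sub_binEntropy_add (m := (1 + a - b) / 2)
    (d := (a + b - 1) / 2) (by linarith) (by linarith) (by linarith)
  rw [show (1 + a - b) / 2 - (a + b - 1) / 2 = 1 - b by ring,
    show (1 + a - b) / 2 + (a + b - 1) / 2 = a by ring, binEntropy_one_sub,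
    show 1 - (1 + a - b) / 2 = ((1 - a) + b) / 2 by ring,
    show 1 + a - b = a + (1 - b) by ring, div_div_div_cancel_right₀ two_ne_zero] at h
  have hlog :
      log ((a + (1 - b)) / ((1 - a) + b)) ≤ (binEntropy b - binEntropy a) / (a + b - 1) := by
    rw [le_div_iff₀ (by linarith)]
    linarith
  rw [log_le_iff_le_exp (by apply div_pos <;> linarith), div_le_iff₀ (by linarith)] at hlog
  exact hlog

theorem exp_binEntropy_slope_sq_mul_le (hba : b ≤ a) (ha : a < 1) (hab : 1 < a + b) :
    exp ((binEntropy b - binEntropy a) / (a + b - 1)) ^ 2 * ((1 - a) * b) ≤ a * (1 - b) := by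
  have h := binEntropy_sub_sub_binEntropy_add_le_mul_log (m := (1 + a - b) / 2)
    (d := (a + b - 1) / 2) (by linarith) (by linarith) (by linarith)
  rw [show (1 + a - b) / 2 - (a + b - 1) / 2 = 1 - b by ring,
    show (1 + a - b) / 2 + (a + b - 1) / 2 = a by ring, binEntropy_one_sub,
    show ((1 + a - b) / 2) ^ 2 - ((a + b - 1) / 2) ^ 2 = a * (1 - b) by ring,
    show (1 - (1 + a - b) / 2) ^ 2 - ((a + b - 1) / 2) ^ 2 = (1 - a) * b by ring] at h
  have hpos : 0 < (1 - a) * b := mul_pos (by linarith) (by linarith)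
  have hlog :
      2 * ((binEntropy b - binEntropy a) / (a + b - 1)) ≤ log (a * (1 - b) / ((1 - a) * b)) := by
    rw [mul_div_assoc', div_le_iff₀ (by linarith)]
    linarith
  rw [← exp_nat_mul, ← le_div_iff₀ hpos]
  exact (le_log_iff_exp_le (div_pos (mul_pos (by linarith) (by linarith)) hpos)).1
    (by exact_mod_cast hlog)

end Slope

theorem mem_Icc_quadratic_roots_of_nonpos {A B C c : ℝ} (hA : 0 < A)
    (hc : A * c ^ 2 - B * c + C ≤ 0) :
    c ∈ Icc ((B - √(B ^ 2 - 4 * A * C)) / (2 * A))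
      ((B + √(B ^ 2 - 4 * A * C)) / (2 * A)) := by
  have h := abs_le.1
    (abs_le_sqrt (x := 2 * A * c - B) (y := B ^ 2 - 4 * A * C) (by nlinarith))
  constructor
  · rw [div_le_iff₀ (by positivity)]; linarith
  · rw [le_div_iff₀ (by positivity)]; linarith

theorem quadratic_upper_root_le {A B C c : ℝ} (hA : 0 < A) (hv : B ≤ 2 * A * c)
    (hc : 0 ≤ A * c ^ 2 - B * c + C) : (B + √(B ^ 2 - 4 * A * C)) / (2 * A) ≤ c := by
  have h : √(B ^ 2 - 4 * A * C) ≤ 2 * A * c - B :=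
    (sqrt_le_left (by linarith)).2 (by nlinarith)
  rw [div_le_iff₀ (by positivity)]
  linarith

section PostIntervals

variable {a b γ : ℝ}

theorem gamma_mul_one_sub_le (ha₁ : a < 1) (hb₀ : 0 < b) (hb₁ : b < 1)
    (hprod : a * (1 - a) ≤ b * (1 - b)) (hγ : 0 ≤ γ)
    (hup : γ ^ 2 * ((1 - a) * b) ≤ a * (1 - b)) : γ * (1 - a) ≤ 1 - b := by
  refine (pow_le_pow_iff_left₀ (by nlinarith) (by linarith) two_ne_zero).1 ?_
  refine le_of_mul_le_mul_left ?_ hb₀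
  nlinarith [mul_le_mul_of_nonneg_right hup (by linarith : (0 : ℝ) ≤ 1 - a),
    mul_le_mul_of_nonneg_right hprod (sub_nonneg.2 hb₁.le)]

theorem one_sub_mul_le_two_mul (ha₁ : a < 1) (hab : 1 < a + b) :
    (1 - b) * ((1 - a) + b) ≤ 2 * a * b := by
  nlinarith [mul_pos (by linarith : (0 : ℝ) < a + b - 1) (by linarith : (0 : ℝ) < 1 + b)]

theorem upper_root_le_mul_gamma_div (ha₀ : 0 < a) (hab : 1 < a + b) (hγ : 0 ≤ γ)
    (hup : γ ^ 2 * ((1 - a) * b) ≤ a * (1 - b)) :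
    (γ * ((1 - a) + b) + √((γ * ((1 - a) + b)) ^ 2 - 4 * a * (1 - b))) / (2 * a)
      ≤ b * γ / a := by
  refine quadratic_upper_root_le ha₀ ?_ ?_
  · rw [show 2 * a * (b * γ / a) = 2 * b * γ by field_simp]
    nlinarith [mul_nonneg hγ (by linarith : (0 : ℝ) ≤ a + b - 1)]
  · rw [show a * (b * γ / a) ^ 2 - γ * ((1 - a) + b) * (b * γ / a) + (1 - b)
        = (a * (1 - b) - γ ^ 2 * ((1 - a) * b)) / a by field_simp; ring]
    exact div_nonneg (by linarith) ha₀.le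

theorem upper_root_le_div_mul_gamma (ha₀ : 0 < a) (ha₁ : a < 1) (hb₀ : 0 < b)
    (hab : 1 < a + b) (hγ : 0 < γ) (hup : γ ^ 2 * ((1 - a) * b) ≤ a * (1 - b)) :
    (γ * ((1 - a) + b) + √((γ * ((1 - a) + b)) ^ 2 - 4 * a * (1 - b))) / (2 * a)
      ≤ a / ((1 - a) * γ) := by
  have ha₁' : 0 < 1 - a := by linarith
  refine quadratic_upper_root_le ha₀ ?_ ?_
  · rw [mul_div_assoc', le_div_iff₀ (by positivity)]
    refine le_of_mul_le_mul_left ?_ hb₀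
    nlinarith [mul_le_mul_of_nonneg_right hup (by linarith : (0 : ℝ) ≤ (1 - a) + b),
      mul_le_mul_of_nonneg_left (one_sub_mul_le_two_mul ha₁ hab) ha₀.le]
  · rw [show a * (a / ((1 - a) * γ)) ^ 2 - γ * ((1 - a) + b) * (a / ((1 - a) * γ)) + (1 - b)
        = (a ^ 3 - γ ^ 2 * (1 - a) * (a * (1 - a) + (a + b - 1))) / ((1 - a) ^ 2 * γ ^ 2) by
          field_simp; ring]
    refine div_nonneg (nonneg_of_mul_nonneg_right (a := b) ?_ hb₀) (by positivity)
    have hK : 0 ≤ a * (1 - a) + (a + b - 1) := by nlinarith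
    nlinarith [mul_le_mul_of_nonneg_right hup hK, mul_nonneg ha₀.le (sq_nonneg (a + b - 1))]

theorem upper_root_le_mul_gamma_div_one_sub (ha₀ : 0 < a) (ha₁ : a < 1) (hb₀ : 0 < b)
    (hb₁ : b < 1) (hab : 1 < a + b) (hγ : 0 ≤ γ)
    (hup : γ ^ 2 * ((1 - a) * b) ≤ a * (1 - b)) :
    (γ * ((1 - a) + b) + √((γ * ((1 - a) + b)) ^ 2 - 4 * a * (1 - b))) / (2 * a)
      ≤ b * γ / (1 - b) := by
  have hb₁' : 0 < 1 - b := by linarith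
  refine quadratic_upper_root_le ha₀ ?_ ?_
  · rw [mul_div_assoc', le_div_iff₀ hb₁']
    nlinarith [mul_le_mul_of_nonneg_left (one_sub_mul_le_two_mul ha₁ hab) hγ]
  · rw [show a * (b * γ / (1 - b)) ^ 2 - γ * ((1 - a) + b) * (b * γ / (1 - b)) + (1 - b)
        = (γ ^ 2 * b * (a + b ^ 2 - 1) + (1 - b) ^ 3) / (1 - b) ^ 2 by field_simp; ring]
    refine div_nonneg (nonneg_of_mul_nonneg_right (a := 1 - a) ?_ (by linarith)) (by positivity)
    rcases le_total 0 (a + b ^ 2 - 1) with h | h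
    · have : 0 ≤ γ ^ 2 * b * (a + b ^ 2 - 1) := by positivity
      nlinarith [pow_pos hb₁' 3]
    · nlinarith [mul_le_mul_of_nonneg_right hup (by linarith : (0 : ℝ) ≤ 1 - a - b ^ 2),
        mul_nonneg hb₁'.le (sq_nonneg (a + b - 1))]

end PostIntervals

/-- For `a, b ∈ (0,1)` with `a + b > 1` and `a(1-a) ≤ b(1-b)`, with
`γ = 2^((H(b)-H(a))/(a+b-1))` and `D = γ²(ā+b)² - 4a·b̄` (which is nonnegative),
there is a real `β` lying simultaneously in the intervals `𝓛₁`, `𝓛₅` and `𝓛₀`. -/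
theorem stmt_13 (a b : ℝ) (ha : a ∈ Set.Ioo (0 : ℝ) 1) (hb : b ∈ Set.Ioo (0 : ℝ) 1)
    (hab : 1 < a + b) (hprod : a * (1 - a) ≤ b * (1 - b))
    (γ : ℝ) (hγ : γ = (2 : ℝ) ^ ((binEnt b - binEnt a) / (a + b - 1)))
    (D : ℝ) (hD : D = γ ^ 2 * ((1 - a) + b) ^ 2 - 4 * a * (1 - b)) :
    0 ≤ D ∧
    ∃ β : ℝ,
      (max ((1 - a) / (1 - b) * γ) ((γ * ((1 - a) + b) - Real.sqrt D) / (2 * (1 - b))) ≤ β ∧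
        β ≤ (γ * ((1 - a) + b) + Real.sqrt D) / (2 * (1 - b))) ∧
      ((γ * ((1 - a) + b) + Real.sqrt D) / (2 * a) ≤ β ∧ β ≤ b * γ / a) ∧
      (1 ≤ β ∧ β ≤ min (a / ((1 - a) * γ)) (b * γ / (1 - b))) := by
  obtain ⟨ha₀, ha₁⟩ := ha
  obtain ⟨hb₀, hb₁⟩ := hb
  have hba : b ≤ a := by nlinarith
  rw [two_rpow_binEnt_div] at hγ
  have hγ₀ : 0 < γ := hγ ▸ exp_pos _
  have hlow : a + (1 - b) ≤ γ * ((1 - a) + b) :=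
    hγ ▸ add_one_sub_le_exp_binEntropy_slope_mul hba ha₁ hab
  have hup : γ ^ 2 * ((1 - a) * b) ≤ a * (1 - b) :=
    hγ ▸ exp_binEntropy_slope_sq_mul_le hba ha₁ hab
  rw [show γ ^ 2 * ((1 - a) + b) ^ 2 = (γ * ((1 - a) + b)) ^ 2 by ring] at hD
  subst hD
  have hρ := (mem_Icc_quadratic_roots_of_nonpos (A := 1 - b) (B := γ * ((1 - a) + b)) (C := a)
    (c := 1) (by linarith) (by linarith)).1
  rw [mul_right_comm 4 (1 - b) a] at hρ
  have hβ := (mem_Icc_quadratic_roots_of_nonpos (A := a) (B := γ * ((1 - a) + b)) (C := 1 - b)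
    (c := 1) ha₀ (by linarith)).2
  refine ⟨by nlinarith, _, ⟨max_le ?_ (hρ.trans hβ), ?_⟩,
    ⟨le_rfl, upper_root_le_mul_gamma_div ha₀ hab hγ₀.le hup⟩, hβ,
    le_min (upper_root_le_div_mul_gamma ha₀ ha₁ hb₀ hab hγ₀ hup)
      (upper_root_le_mul_gamma_div_one_sub ha₀ ha₁ hb₀ hb₁ hab hγ₀.le hup)⟩
  · refine le_trans ?_ hβ
    rw [div_mul_eq_mul_div, div_le_one (by linarith), mul_comm]
    exact gamma_mul_one_sub_le ha₁ hb₀ hb₁ hprod hγ₀.le hup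
  · exact div_le_div_of_nonneg_left (by positivity) (by linarith) (by linarith)
end

section
/- Let a, b ∈ (0,1) with a ≥ 1-b and a(1-a) ≤ b(1-b), and let γ = 2^{(H(b)-H(a))/(a+b-1)} where H is the binary entropy function. Then b·γ ≥ a, i.e., bγ/a ≥ 1. -/
open Real

lemma mul_log_div_sub_one_le {x y : ℝ} (hx : 0 ≤ x) (hxy : x ≤ y) (hx1 : x ≠ 1) (hy1 : y ≠ 1) :
    x * log x / (x - 1) ≤ y * log y / (y - 1) := by
  have h := convexOn_mul_log.secant_mono (a := 1) (Set.mem_Ici.2 zero_le_one)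
    (Set.mem_Ici.2 hx) (Set.mem_Ici.2 (hx.trans hxy)) hx1 hy1 hxy
  simpa using h

lemma one_sub_mul_log_div_le {a b : ℝ} (ha : 0 < a) (ha1 : a < 1) (hb : 0 < b) (hab : 1 < a + b)
    (h : a * (1 - a) ≤ b * (1 - b)) :
    (1 - b) * log ((1 - b) / a) ≤ (1 - a) * log ((1 - a) / b) := by
  have hx : 0 ≤ (1 - a) / b := div_nonneg (by linarith) hb.le
  have hxy : (1 - a) / b ≤ (1 - b) / a := by
    rw [div_le_div_iff₀ hb ha]; linarith
  have hx1 : (1 - a) / b ≠ 1 := by rw [Ne, div_eq_one_iff_eq hb.ne']; intro; linarith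
  have hy1 : (1 - b) / a ≠ 1 := by rw [Ne, div_eq_one_iff_eq ha.ne']; intro; linarith
  have hslope := mul_log_div_sub_one_le hx hxy hx1 hy1
  -- both secant slopes have the common denominator `1 - a - b < 0`
  have ex : (1 - a) / b * log ((1 - a) / b) / ((1 - a) / b - 1)
      = (1 - a) * log ((1 - a) / b) / (1 - a - b) := by
    field_simp
  have ey : (1 - b) / a * log ((1 - b) / a) / ((1 - b) / a - 1)
      = (1 - b) * log ((1 - b) / a) / (1 - a - b) := by
    field_simp; ring
  rw [ex, ey, div_le_div_right_of_neg (by linarith)] at hslope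
  exact hslope

lemma binEnt_sub_binEnt {a b : ℝ} (ha : 0 < a) (ha1 : a < 1) (hb : 0 < b) (hb1 : b < 1) :
    binEnt b - binEnt a = (a + b - 1) * logb 2 (a / b)
      + ((1 - a) * logb 2 ((1 - a) / b) - (1 - b) * logb 2 ((1 - b) / a)) := by
  rw [logb_div ha.ne' hb.ne', logb_div (by linarith) hb.ne', logb_div (by linarith) ha.ne']
  unfold binEnt
  ring

lemma logb_div_le_binEnt_sub_binEnt_div {a b : ℝ} (ha : 0 < a) (ha1 : a < 1) (hb : 0 < b)
    (hb1 : b < 1) (hab : 1 < a + b) (h : a * (1 - a) ≤ b * (1 - b)) :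
    logb 2 (a / b) ≤ (binEnt b - binEnt a) / (a + b - 1) := by
  have hdiff : 0 ≤ (1 - a) * logb 2 ((1 - a) / b) - (1 - b) * logb 2 ((1 - b) / a) := by
    simp only [logb, mul_div_assoc', ← sub_div]
    exact div_nonneg (sub_nonneg.2 (one_sub_mul_log_div_le ha ha1 hb hab h))
      (log_pos one_lt_two).le
  rw [le_div_iff₀ (by linarith), binEnt_sub_binEnt ha ha1 hb hb1]
  linarith

/-- For `a, b ∈ (0,1)` with `a ≥ 1-b` (and `a + b ≠ 1`, so that `γ` is well defined),
`a(1-a) ≤ b(1-b)`, and `γ = 2^((H(b)-H(a))/(a+b-1))`, we have `b·γ ≥ a`,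
i.e. `bγ/a ≥ 1`. -/
theorem stmt_16 (a b : ℝ) (ha : a ∈ Set.Ioo (0 : ℝ) 1) (hb : b ∈ Set.Ioo (0 : ℝ) 1)
    (h1 : 1 - b ≤ a) (hne : a + b ≠ 1) (h2 : a * (1 - a) ≤ b * (1 - b))
    (γ : ℝ) (hγ : γ = (2 : ℝ) ^ ((binEnt b - binEnt a) / (a + b - 1))) :
    a ≤ b * γ ∧ 1 ≤ b * γ / a := by
  obtain ⟨ha0, ha1⟩ := ha
  obtain ⟨hb0, hb1⟩ := hb
  have hab : 1 < a + b := lt_of_le_of_ne (by linarith) (Ne.symm hne)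
  have hexp := logb_div_le_binEnt_sub_binEnt_div ha0 ha1 hb0 hb1 hab h2
  have hle : a ≤ b * γ := calc
    a = b * 2 ^ logb 2 (a / b) := by
      rw [rpow_logb two_pos (by norm_num) (div_pos ha0 hb0)]; field_simp
    _ ≤ b * γ := by
      rw [hγ]; gcongr; norm_num
  exact ⟨hle, by rwa [le_div_iff₀ ha0, one_mul]⟩
end

section
/- Let a, b ∈ (0,1) with a + b > 1, and let γ = 2^{(H(b)-H(a))/(a+b-1)} where H is the binary entropy function. Then (1-b)/b ≤ γ ≤ a/(1-a). Equivalently, min( a/((1-a)·γ), b·γ/(1-b) ) ≥ 1. -/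
/-!
Both bounds are one inequality, `(1-b)/b ≤ γ`, applied once to `(a, b)` and once to `(b, a)`:
swapping `a` and `b` replaces `γ` by `γ⁻¹`. In natural logarithms,
`(H(b) - H(a)) log 2 = (a + b - 1) log((1-b)/b) + D(a ‖ 1-b)`, where `D` is the Kullback–Leibler
divergence between Bernoulli distributions, so the inequality is Gibbs' inequality `D ≥ 0`
divided by `a + b - 1 > 0`.
-/

open Real InformationTheory

noncomputable def bernoulliKL (p q : ℝ) : ℝ :=
  p * log (p / q) + (1 - p) * log ((1 - p) / (1 - q))

lemma bernoulliKL_eq_klFun {p q : ℝ} (hq : q ∈ Set.Ioo (0 : ℝ) 1) :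
    bernoulliKL p q = q * klFun (p / q) + (1 - q) * klFun ((1 - p) / (1 - q)) := by
  have hq0 : q ≠ 0 := hq.1.ne'
  have hq1 : 1 - q ≠ 0 := (sub_pos.2 hq.2).ne'
  simp only [bernoulliKL, klFun_apply]
  field_simp
  ring

lemma bernoulliKL_nonneg {p q : ℝ} (hp : p ∈ Set.Icc (0 : ℝ) 1) (hq : q ∈ Set.Ioo (0 : ℝ) 1) :
    0 ≤ bernoulliKL p q := by
  obtain ⟨hp0, hp1⟩ := hp
  obtain ⟨hq0, hq1⟩ := hq
  rw [bernoulliKL_eq_klFun ⟨hq0, hq1⟩]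
  have h₁ : 0 ≤ klFun (p / q) := klFun_nonneg (by positivity)
  have h₂ : 0 ≤ klFun ((1 - p) / (1 - q)) :=
    klFun_nonneg (div_nonneg (sub_nonneg.2 hp1) (sub_pos.2 hq1).le)
  have hq1' : 0 < 1 - q := sub_pos.2 hq1
  positivity

lemma binEnt_sub_binEnt_mul_log_two {a b : ℝ} (ha : a ∈ Set.Ioo (0 : ℝ) 1)
    (hb : b ∈ Set.Ioo (0 : ℝ) 1) :
    (binEnt b - binEnt a) * log 2 =
      (a + b - 1) * log ((1 - b) / b) + bernoulliKL a (1 - b) := by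
  obtain ⟨ha0, ha1⟩ := ha
  obtain ⟨hb0, hb1⟩ := hb
  have ha1' : 1 - a ≠ 0 := (sub_pos.2 ha1).ne'
  have hb1' : 1 - b ≠ 0 := (sub_pos.2 hb1).ne'
  have hlog2 : log 2 ≠ 0 := (log_pos one_lt_two).ne'
  simp only [binEnt, bernoulliKL, logb, sub_sub_cancel]
  rw [log_div hb1' hb0.ne', log_div ha0.ne' hb1', log_div ha1' hb0.ne']
  field_simp
  ring

lemma one_sub_div_le_two_rpow {a b : ℝ} (ha : a ∈ Set.Ioo (0 : ℝ) 1)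
    (hb : b ∈ Set.Ioo (0 : ℝ) 1) (hab : 1 < a + b) :
    (1 - b) / b ≤ (2 : ℝ) ^ ((binEnt b - binEnt a) / (a + b - 1)) := by
  have hKL : 0 ≤ bernoulliKL a (1 - b) :=
    bernoulliKL_nonneg (Set.Ioo_subset_Icc_self ha) ⟨sub_pos.2 hb.2, sub_lt_self 1 hb.1⟩
  have hs : 0 < a + b - 1 := sub_pos.2 hab
  rw [le_rpow_iff_log_le (div_pos (sub_pos.2 hb.2) hb.1) two_pos, div_mul_eq_mul_div,
    le_div_iff₀ hs, binEnt_sub_binEnt_mul_log_two ha hb]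
  linarith

/-- For `a, b ∈ (0,1)` with `a + b > 1` and `γ = 2^((H(b)-H(a))/(a+b-1))`, we have
`(1-b)/b ≤ γ ≤ a/(1-a)`; equivalently, `min( a/((1-a)·γ), b·γ/(1-b) ) ≥ 1`. -/
theorem stmt_19 (a b : ℝ) (ha : a ∈ Set.Ioo (0 : ℝ) 1) (hb : b ∈ Set.Ioo (0 : ℝ) 1)
    (hab : 1 < a + b) (γ : ℝ) (hγ : γ = (2 : ℝ) ^ ((binEnt b - binEnt a) / (a + b - 1))) :
    ((1 - b) / b ≤ γ ∧ γ ≤ a / (1 - a)) ∧ 1 ≤ min (a / ((1 - a) * γ)) (b * γ / (1 - b)) := by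
  have hγ_pos : 0 < γ := hγ ▸ rpow_pos_of_pos two_pos _
  have ha1 : 0 < 1 - a := sub_pos.2 ha.2
  have hb1 : 0 < 1 - b := sub_pos.2 hb.2
  have hlower : (1 - b) / b ≤ γ := hγ ▸ one_sub_div_le_two_rpow ha hb hab
  have hupper : γ ≤ a / (1 - a) := by
    have hswap := one_sub_div_le_two_rpow hb ha (by linarith)
    rw [show (binEnt a - binEnt b) / (b + a - 1) = -((binEnt b - binEnt a) / (a + b - 1)) by ring,
      rpow_neg zero_le_two, ← hγ] at hswap
    rwa [← inv_div, le_inv_comm₀ hγ_pos (div_pos ha1 ha.1)]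
  refine ⟨⟨hlower, hupper⟩, le_min ?_ ?_⟩
  · rw [one_le_div (by positivity), ← le_div_iff₀' ha1]
    exact hupper
  · rw [one_le_div hb1, ← div_le_iff₀' hb.1]
    exact hlower
end
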